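/- arXiv:1709.04644 — 2 statements merged into one kernel-verified Lean document; each statement's English description precedes it below -/
import Mathlib

section
/- Let ξ : ℝ³ → ℝ³ be a smooth vector field whose lowered-index components ξ_ν = Σ_μ η_{νμ} ξ^μ satisfy the Killing equations ∂_μ ξ_ν + ∂_ν ξ_μ = 0 for all μ, ν ∈ {0,1,2}. Then there exist a constant antisymmetric real 3×3 matrix C and a constant vector B ∈ ℝ³ such that ξ_ν(x) = Σ_α C_{αν} x^α + B_ν for all x ∈ ℝ³. -/
open Matrix

noncomputable section

/-- (2+1)-dimensional Minkowski metric diag(1,-1,-1). -/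
def η : Fin 3 → Fin 3 → ℝ := fun μ ν => if μ = ν then (if μ = 0 then 1 else -1) else 0

/-- Partial derivative ∂_μ of a real-valued function on ℝ³. -/
def pd (μ : Fin 3) (f : (Fin 3 → ℝ) → ℝ) (x : Fin 3 → ℝ) : ℝ :=
  fderiv ℝ f x (Pi.single μ 1)

lemma pd_contDiff {f : (Fin 3 → ℝ) → ℝ} (hf : ContDiff ℝ (⊤ : ℕ∞) f) (μ : Fin 3) :
    ContDiff ℝ (⊤ : ℕ∞) (pd μ f) := by
  have h1 : ContDiff ℝ (⊤ : ℕ∞) (fderiv ℝ f) := hf.fderiv_right (by simp)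
  exact h1.clm_apply contDiff_const

lemma pd_eval {f : (Fin 3 → ℝ) → ℝ} (hf : ContDiff ℝ (⊤ : ℕ∞) f) (a b : Fin 3) (x : Fin 3 → ℝ) :
    pd a (pd b f) x = fderiv ℝ (fderiv ℝ f) x (Pi.single a 1) (Pi.single b 1) := by
  have hdf : ContDiff ℝ (⊤ : ℕ∞) (fderiv ℝ f) := hf.fderiv_right (by simp)
  have h := fderiv_clm_apply (c := fderiv ℝ f) (u := fun _ => (Pi.single b 1 : Fin 3 → ℝ))
    (hdf.differentiable (by simp) x) (differentiableAt_const _)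
  rw [show pd b f =
    (fun y => (fderiv ℝ f y) ((fun _ => (Pi.single b 1 : Fin 3 → ℝ)) y)) from rfl]
  show fderiv ℝ _ x (Pi.single a 1) = _
  rw [h]
  simp [fderiv_const]

lemma pd_swap {f : (Fin 3 → ℝ) → ℝ} (hf : ContDiff ℝ (⊤ : ℕ∞) f) (a b : Fin 3) (x : Fin 3 → ℝ) :
    pd a (pd b f) x = pd b (pd a f) x := by
  rw [pd_eval hf, pd_eval hf]
  exact (hf.contDiffAt.isSymmSndFDerivAt (by rw [minSmoothness_of_isRCLikeNormedField]; exact WithTop.coe_le_coe.2 le_top)) _ _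

/-- A smooth vector field on flat (2+1)-dimensional Minkowski space whose
lowered-index components satisfy the Killing equations is affine:
ξ_ν(x) = Σ_α C_{αν} x^α + B_ν with C a constant antisymmetric matrix. -/
theorem killing_fields_are_affine
    (ξ : (Fin 3 → ℝ) → (Fin 3 → ℝ)) (hξ : ContDiff ℝ (⊤ : ℕ∞) ξ)
    (ξl : Fin 3 → (Fin 3 → ℝ) → ℝ)
    (hξl : ∀ ν x, ξl ν x = ∑ μ, η ν μ * ξ x μ)
    (hkill : ∀ μ ν : Fin 3, ∀ x, pd μ (ξl ν) x + pd ν (ξl μ) x = 0) :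
    ∃ C : Matrix (Fin 3) (Fin 3) ℝ, Cᵀ = -C ∧ ∃ B : Fin 3 → ℝ,
      ∀ x : Fin 3 → ℝ, ∀ ν : Fin 3, ξl ν x = (∑ α, C α ν * x α) + B ν := by
  -- smoothness of the lowered components
  have hsm : ∀ ν, ContDiff ℝ (⊤ : ℕ∞) (ξl ν) := by
    intro ν
    have : (ξl ν) = fun x => ∑ μ, η ν μ * ξ x μ := funext (hξl ν)
    rw [this]
    exact ContDiff.sum fun μ _ => contDiff_const.mul ((contDiff_pi.1 hξ) μ)
  -- antisymmetry of first derivatives as functions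
  have hfun : ∀ b c : Fin 3, pd b (ξl c) = fun x => -(pd c (ξl b) x) := by
    intro b c; funext x
    have := hkill b c x; linarith
  -- second derivatives: antisymmetric in last two indices
  have hanti : ∀ a b c : Fin 3, ∀ x, pd a (pd b (ξl c)) x = -(pd a (pd c (ξl b)) x) := by
    intro a b c x
    rw [hfun b c]
    show fderiv ℝ (fun x => -(pd c (ξl b) x)) x (Pi.single a 1) = _
    rw [fderiv_fun_neg]
    simp [pd]
  -- all second derivatives vanish
  have hzero : ∀ a b c : Fin 3, ∀ x, pd a (pd b (ξl c)) x = 0 := by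
    intro a b c x
    have h1 : pd a (pd b (ξl c)) x = -(pd a (pd c (ξl b)) x) := hanti a b c x
    have h2 : pd a (pd c (ξl b)) x = pd c (pd a (ξl b)) x := pd_swap (hsm b) a c x
    have h3 : pd c (pd a (ξl b)) x = -(pd c (pd b (ξl a)) x) := hanti c a b x
    have h4 : pd c (pd b (ξl a)) x = pd b (pd c (ξl a)) x := pd_swap (hsm a) c b x
    have h5 : pd b (pd c (ξl a)) x = -(pd b (pd a (ξl c)) x) := hanti b c a x
    have h6 : pd b (pd a (ξl c)) x = pd a (pd b (ξl c)) x := pd_swap (hsm c) b a x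
    linarith
  -- hence first derivatives are constant
  have hconst : ∀ b c : Fin 3, ∀ x, pd b (ξl c) x = pd b (ξl c) 0 := by
    intro b c x
    apply is_const_of_fderiv_eq_zero ((pd_contDiff (hsm c) b).differentiable (by simp))
    intro y
    apply ContinuousLinearMap.coe_injective
    apply (Pi.basisFun ℝ (Fin 3)).ext
    intro a
    simp only [Pi.basisFun_apply, ContinuousLinearMap.coe_coe, ContinuousLinearMap.zero_apply,
      LinearMap.zero_apply]
    exact hzero a b c y
  refine ⟨fun a ν => pd a (ξl ν) 0, ?_, fun ν => ξl ν 0, ?_⟩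
  · ext a b
    show pd b (ξl a) 0 = -(pd a (ξl b) 0)
    have := hkill b a 0; linarith
  · intro x ν
    -- the linear part as a continuous linear map
    set L : (Fin 3 → ℝ) →L[ℝ] ℝ :=
      ∑ α, pd α (ξl ν) 0 • ContinuousLinearMap.proj α with hL
    have hLx : ∀ y : Fin 3 → ℝ, L y = ∑ α, pd α (ξl ν) 0 * y α := by
      intro y
      simp [hL, ContinuousLinearMap.sum_apply, ContinuousLinearMap.proj_apply,
        smul_eq_mul]
    have hdiff : Differentiable ℝ (fun y => ξl ν y - L y) :=
      ((hsm ν).differentiable (by simp)).sub L.differentiable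
    have hkey : (fun y => ξl ν y - L y) x = (fun y => ξl ν y - L y) 0 := by
      apply is_const_of_fderiv_eq_zero hdiff
      intro y
      have h1 : fderiv ℝ (fun y => ξl ν y - L y) y = fderiv ℝ (ξl ν) y - L := by
        have := (((hsm ν).differentiable (by simp) y).hasFDerivAt.sub (L.hasFDerivAt (x := y)))
        exact this.fderiv
      rw [h1]
      apply ContinuousLinearMap.coe_injective
      apply (Pi.basisFun ℝ (Fin 3)).ext
      intro a
      simp only [Pi.basisFun_apply, ContinuousLinearMap.coe_coe, ContinuousLinearMap.zero_apply,
        LinearMap.zero_apply, ContinuousLinearMap.coe_sub', Pi.sub_apply]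
      have : fderiv ℝ (ξl ν) y (Pi.single a 1) = pd a (ξl ν) y := rfl
      rw [this, hconst a ν y, hLx]
      have : ∀ α, pd α (ξl ν) 0 * (Pi.single a 1 : Fin 3 → ℝ) α
          = if α = a then pd a (ξl ν) 0 else 0 := by
        intro α
        by_cases h : α = a <;> simp [h, Pi.single_apply]
      rw [Finset.sum_congr rfl (fun α _ => this α)]
      simp
    have hL0 : L (0 : Fin 3 → ℝ) = 0 := by simp
    simp only [hL0, sub_zero] at hkey
    have := hLx x
    linarith [hkey]

end
end

section
/- Let s ∈ {1,−1}, γ⁰ = σ₃, γ¹ = i s σ₁, γ² = i σ₂, m ∈ ℝ, λ₁, λ₂ ∈ ℝ, and let a₀, a₁, a₂ : ℝ → ℝ be smooth. Define the potential A_ν(x) = a_ν(x⁰ − x²) for ν = 0,1,2, the Dirac operator H = γ⁰(i∂₀ − A₀) + γ¹(i∂₁ − A₁) + γ²(i∂₂ − A₂) − m, and, for a smooth ψ̃ : ℝ → ℂ², the separable function ψ(x) = e^{−iλ₁x¹ − iλ₂(x⁰ + x²)} ψ̃(x⁰ − x²). Then Hψ = 0 on ℝ³ if and only if ψ̃ satisfies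 the ordinary differential equation {γ⁰(λ₂ + i d/dt − a₀(t)) + γ¹(λ₁ − a₁(t)) + γ²(λ₂ − i d/dt − a₂(t)) − m} ψ̃(t) = 0 for all t ∈ ℝ. -/
open Matrix

noncomputable section

abbrev M2 : Type := Matrix (Fin 2) (Fin 2) ℂ

/-- Pauli matrices -/
def pauli1 : M2 := !![0, 1; 1, 0]
def pauli2 : M2 := !![0, -Complex.I; Complex.I, 0]
def pauli3 : M2 := !![1, 0; 0, -1]

/-- The gamma matrices γ⁰ = σ₃, γ¹ = i s σ₁, γ² = i σ₂. -/
def gamma (s : ℝ) : Fin 3 → M2 :=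
  ![pauli3, (Complex.I * (s : ℂ)) • pauli1, Complex.I • pauli2]

/-- Partial derivative ∂_ν of a ℂ²-valued function on ℝ³. -/
def pdC (ν : Fin 3) (f : (Fin 3 → ℝ) → (Fin 2 → ℂ)) (x : Fin 3 → ℝ) : Fin 2 → ℂ :=
  fderiv ℝ f x (Pi.single ν 1)

/-- The (2+1)-dimensional Dirac operator
H = γ⁰(i∂₀ − A₀) + γ¹(i∂₁ − A₁) + γ²(i∂₂ − A₂) − m. -/
def diracOp (s : ℝ) (A : Fin 3 → (Fin 3 → ℝ) → ℝ) (m : ℝ)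
    (ψ : (Fin 3 → ℝ) → (Fin 2 → ℂ)) : (Fin 3 → ℝ) → (Fin 2 → ℂ) :=
  fun x => (∑ ν, (gamma s ν).mulVec (Complex.I • pdC ν ψ x - (A ν x : ℂ) • ψ x))
    - (m : ℂ) • ψ x

def Lproj (ν : Fin 3) : (Fin 3 → ℝ) →L[ℝ] ℝ := ContinuousLinearMap.proj ν

lemma hL (ν : Fin 3) (x : Fin 3 → ℝ) :
    HasFDerivAt (fun x : Fin 3 → ℝ => ((x ν : ℝ) : ℂ))
      (Complex.ofRealCLM.comp (Lproj ν)) x :=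
  Complex.ofRealCLM.hasFDerivAt.comp x (Lproj ν).hasFDerivAt

lemma pdC_key (lam₁ lam₂ : ℝ) (ψt : ℝ → (Fin 2 → ℂ)) (hψt : ContDiff ℝ (⊤ : ℕ∞) ψt)
    (x : Fin 3 → ℝ) (ν : Fin 3) :
    pdC ν (fun x : Fin 3 → ℝ => Complex.exp (-(Complex.I * lam₁ * x 1)
        - Complex.I * lam₂ * (x 0 + x 2)) • ψt (x 0 - x 2)) x
    = Complex.exp (-(Complex.I * lam₁ * x 1) - Complex.I * lam₂ * (x 0 + x 2)) •
      ((![-(Complex.I * lam₂), -(Complex.I * lam₁), -(Complex.I * lam₂)] ν) • ψt (x 0 - x 2)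
        + (![(1 : ℂ), 0, -1] ν) • deriv ψt (x 0 - x 2)) := by
  set u := x 0 - x 2 with hu
  have hφ : HasFDerivAt (fun x : Fin 3 → ℝ =>
      -(Complex.I * lam₁ * x 1) - Complex.I * lam₂ * (x 0 + x 2))
      (-((Complex.I * lam₁) • (Complex.ofRealCLM.comp (Lproj 1)))
        - (Complex.I * lam₂) • (Complex.ofRealCLM.comp (Lproj 0)
            + Complex.ofRealCLM.comp (Lproj 2))) x :=
    (((hL 1 x).const_mul _).neg).sub (((hL 0 x).add (hL 2 x)).const_mul _)
  have hg : HasFDerivAt (fun x : Fin 3 → ℝ => x 0 - x 2) (Lproj 0 - Lproj 2) x :=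
    (Lproj 0).hasFDerivAt.sub (Lproj 2).hasFDerivAt
  have hψd : HasDerivAt ψt (deriv ψt u) u :=
    ((hψt.differentiable (by simp)) u).hasDerivAt
  have hF : HasFDerivAt (fun x : Fin 3 → ℝ => ψt (x 0 - x 2))
      ((Lproj 0 - Lproj 2).smulRight (deriv ψt u)) x := by
    have heq : ((ContinuousLinearMap.smulRight (1 : ℝ →L[ℝ] ℝ) (deriv ψt u)).comp
        (Lproj 0 - Lproj 2)) = (Lproj 0 - Lproj 2).smulRight (deriv ψt u) := by
      ext v i; simp [sub_mul]
    exact heq ▸ (hψd.hasFDerivAt.comp x hg)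
  have hD : HasFDerivAt (fun x : Fin 3 → ℝ => Complex.exp (-(Complex.I * lam₁ * x 1)
      - Complex.I * lam₂ * (x 0 + x 2)) • ψt (x 0 - x 2)) _ x := (hφ.cexp).smul hF
  rw [pdC, hD.fderiv]
  fin_cases ν <;>
    simp [Lproj, ContinuousLinearMap.smulRight_apply, Pi.single_apply, smul_smul,
      smul_add, Complex.real_smul, ← hu] <;> ring_nf

lemma Imul (r : ℝ) : Complex.I * -(Complex.I * (r : ℂ)) = (r : ℂ) := by
  rw [mul_neg, ← mul_assoc, Complex.I_mul_I]; ring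

lemma dirac_eq (s : ℝ) (m lam₁ lam₂ : ℝ) (a : Fin 3 → ℝ → ℝ)
    (ψt : ℝ → (Fin 2 → ℂ)) (hψt : ContDiff ℝ (⊤ : ℕ∞) ψt) (x : Fin 3 → ℝ) :
    diracOp s (fun ν x => a ν (x 0 - x 2)) m
      (fun x => Complex.exp (-(Complex.I * lam₁ * x 1)
          - Complex.I * lam₂ * (x 0 + x 2)) • ψt (x 0 - x 2)) x
    = Complex.exp (-(Complex.I * lam₁ * x 1) - Complex.I * lam₂ * (x 0 + x 2)) •
      ((gamma s 0).mulVec ((((lam₂ - a 0 (x 0 - x 2) : ℝ)) : ℂ) • ψt (x 0 - x 2)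
          + Complex.I • deriv ψt (x 0 - x 2))
        + (gamma s 1).mulVec ((((lam₁ - a 1 (x 0 - x 2) : ℝ)) : ℂ) • ψt (x 0 - x 2))
        + (gamma s 2).mulVec ((((lam₂ - a 2 (x 0 - x 2) : ℝ)) : ℂ) • ψt (x 0 - x 2)
          - Complex.I • deriv ψt (x 0 - x 2))
        - (m : ℂ) • ψt (x 0 - x 2)) := by
  set u := x 0 - x 2 with hu
  set E := Complex.exp (-(Complex.I * lam₁ * x 1) - Complex.I * lam₂ * (x 0 + x 2)) with hE
  rw [diracOp, Fin.sum_univ_three]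
  rw [pdC_key lam₁ lam₂ ψt hψt x 0, pdC_key lam₁ lam₂ ψt hψt x 1,
    pdC_key lam₁ lam₂ ψt hψt x 2]
  simp only [Matrix.cons_val_zero, Matrix.cons_val_one, Matrix.head_cons,
    Matrix.cons_val_two, Matrix.tail_cons, ← hu, ← hE]
  have h0 : Complex.I • (E • ((-(Complex.I * lam₂)) • ψt u + (1 : ℂ) • deriv ψt u))
      - ((a 0 u : ℝ) : ℂ) • (E • ψt u)
      = E • ((((lam₂ - a 0 u : ℝ)) : ℂ) • ψt u + Complex.I • deriv ψt u) := by
    match_scalars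
    · push_cast; linear_combination (-(E * (lam₂ : ℂ))) * Complex.I_mul_I
    · ring
  have h1 : Complex.I • (E • ((-(Complex.I * lam₁)) • ψt u + (0 : ℂ) • deriv ψt u))
      - ((a 1 u : ℝ) : ℂ) • (E • ψt u)
      = E • ((((lam₁ - a 1 u : ℝ)) : ℂ) • ψt u) := by
    match_scalars
    · push_cast; linear_combination (-(E * (lam₁ : ℂ))) * Complex.I_mul_I
    · ring
  have h2 : Complex.I • (E • ((-(Complex.I * lam₂)) • ψt u + (-1 : ℂ) • deriv ψt u))
      - ((a 2 u : ℝ) : ℂ) • (E • ψt u)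
      = E • ((((lam₂ - a 2 u : ℝ)) : ℂ) • ψt u - Complex.I • deriv ψt u) := by
    match_scalars
    · push_cast; linear_combination (-(E * (lam₂ : ℂ))) * Complex.I_mul_I
    · ring
  rw [h0, h1, h2]
  simp only [Matrix.mulVec_smul]
  module

/-- Separation of variables in light-cone variables with the complete set
{p₁, (p₀+p₂)/2}: for a potential depending only on u₀ = x⁰ − x², the separable
function ψ = e^{−iλ₁x¹ − iλ₂(x⁰+x²)}ψ̃(x⁰−x²) solves the Dirac equation iff ψ̃
solves the corresponding ODE. -/
theorem separation_lightcone (s : ℝ) (hs : s = 1 ∨ s = -1) (m lam₁ lam₂ : ℝ)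
    (a : Fin 3 → ℝ → ℝ) (ha : ∀ ν, ContDiff ℝ (⊤ : ℕ∞) (a ν))
    (ψt : ℝ → (Fin 2 → ℂ)) (hψt : ContDiff ℝ (⊤ : ℕ∞) ψt) :
    (∀ x : Fin 3 → ℝ,
        diracOp s (fun ν x => a ν (x 0 - x 2)) m
          (fun x => Complex.exp (-(Complex.I * lam₁ * x 1)
              - Complex.I * lam₂ * (x 0 + x 2)) • ψt (x 0 - x 2)) x
          = 0)
    ↔ (∀ t : ℝ,
        (gamma s 0).mulVec ((((lam₂ - a 0 t : ℝ)) : ℂ) • ψt t + Complex.I • deriv ψt t)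
        + (gamma s 1).mulVec ((((lam₁ - a 1 t : ℝ)) : ℂ) • ψt t)
        + (gamma s 2).mulVec ((((lam₂ - a 2 t : ℝ)) : ℂ) • ψt t - Complex.I • deriv ψt t)
        - (m : ℂ) • ψt t = 0) := by
  constructor
  · intro h t
    have := h ![t, 0, 0]
    rw [dirac_eq s m lam₁ lam₂ a ψt hψt] at this
    have hx : (![t, 0, 0] : Fin 3 → ℝ) 0 - ![t, 0, 0] 2 = t := by simp
    rw [hx] at this
    rcases smul_eq_zero.mp this with h' | h'
    · exact absurd h' (Complex.exp_ne_zero _)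
    · exact h'
  · intro h x
    rw [dirac_eq s m lam₁ lam₂ a ψt hψt, h (x 0 - x 2), smul_zero]

end
end
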